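/- arXiv:2203.04506 — 7 statements merged into one kernel-verified Lean document; each statement's English description precedes it below -/
import Mathlib

section
/- For directed spaces X and Y, a function f : X → Y is topologically continuous if and only if it is directed continuous (monotone and preserving all directed limits). -/
open Set

/-- The specialization order on a topological space: `x ⊑ y` iff `x ∈ closure {y}`. -/
def sOrd (X : Type*) [TopologicalSpace X] (x y : X) : Prop := x ∈ closure {y}

/-- A directed subset `D`, viewed as a net indexed by itself, converges to `x`:
it is eventually in every open neighborhood of `x`. -/
def dconv (X : Type*) [TopologicalSpace X] (D : Set X) (x : X) : Prop :=
  D.Nonempty ∧ DirectedOn (sOrd X) D ∧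
    ∀ U : Set X, IsOpen U → x ∈ U → ∃ d ∈ D, ∀ e ∈ D, sOrd X d e → e ∈ U

/-- A subset `U` is directed open if every directed net converging to a point of `U`
meets `U`. -/
def dOpen (X : Type*) [TopologicalSpace X] (U : Set X) : Prop :=
  ∀ D x, dconv X D x → x ∈ U → (D ∩ U).Nonempty

/-! Open sets are upper sets for the specialization order, so continuous maps are monotone and carry
the tail of a converging directed set into every neighbourhood of the limit. Conversely, open sets are
always directed open, so the preimage of an open set under a map preserving directed limits is
directed open, hence open because `X` is a directed space. -/

section DirectedSpace

variable {X Y : Type*} [TopologicalSpace X] [TopologicalSpace Y]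

lemma sOrd_iff_specializes {x y : X} : sOrd X x y ↔ y ⤳ x :=
  specializes_iff_mem_closure.symm

lemma sOrd_refl (x : X) : sOrd X x x :=
  sOrd_iff_specializes.mpr specializes_rfl

lemma IsOpen.mem_of_sOrd {U : Set X} (hU : IsOpen U) {x y : X} (hx : x ∈ U)
    (h : sOrd X x y) : y ∈ U :=
  (sOrd_iff_specializes.mp h).mem_open hU hx

lemma Continuous.sOrd {f : X → Y} (hf : Continuous f) {x y : X} (h : sOrd X x y) :
    sOrd Y (f x) (f y) :=
  sOrd_iff_specializes.mpr ((sOrd_iff_specializes.mp h).map hf)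

lemma IsOpen.dOpen {U : Set X} (hU : IsOpen U) : dOpen X U := by
  rintro D x ⟨-, -, hconv⟩ hx
  obtain ⟨d, hd, htail⟩ := hconv U hU hx
  exact ⟨d, hd, htail d hd (sOrd_refl d)⟩

lemma Continuous.dconv_image {f : X → Y} (hf : Continuous f) {D : Set X} {x : X}
    (hD : dconv X D x) : dconv Y (f '' D) (f x) := by
  obtain ⟨hne, hdir, hconv⟩ := hD
  refine ⟨hne.image f, ?_, fun U hU hxU => ?_⟩
  · rintro - ⟨a, ha, rfl⟩ - ⟨b, hb, rfl⟩
    obtain ⟨c, hc, hac, hbc⟩ := hdir a ha b hb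
    exact ⟨f c, mem_image_of_mem f hc, hf.sOrd hac, hf.sOrd hbc⟩
  · obtain ⟨d, hd, htail⟩ := hconv (f ⁻¹' U) (hU.preimage hf) hxU
    refine ⟨f d, mem_image_of_mem f hd, ?_⟩
    rintro - ⟨e, he, rfl⟩ hde
    exact hU.mem_of_sOrd (htail d hd (sOrd_refl d)) hde

lemma continuous_of_dconv_image (hX : ∀ U : Set X, dOpen X U → IsOpen U) {f : X → Y}
    (hf : ∀ (D : Set X) (x : X), dconv X D x → dconv Y (f '' D) (f x)) : Continuous f := by
  refine continuous_def.mpr fun U hU => hX _ fun D x hD hxU => ?_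
  obtain ⟨-, ⟨d, hd, rfl⟩, hdU⟩ := hU.dOpen (f '' D) (f x) (hf D x hD) hxU
  exact ⟨d, hd, hdU⟩

end DirectedSpace

theorem stmt_7_general {X Y : Type*} [TopologicalSpace X] [TopologicalSpace Y]
    (hX : ∀ U : Set X, dOpen X U ↔ IsOpen U)
    (f : X → Y) :
    Continuous f ↔
      ((∀ x y : X, sOrd X x y → sOrd Y (f x) (f y)) ∧
        (∀ (D : Set X) (x : X), dconv X D x → dconv Y (f '' D) (f x))) :=
  ⟨fun hf => ⟨fun _ _ => hf.sOrd, fun _ _ => hf.dconv_image⟩,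
    fun ⟨_, hlim⟩ => continuous_of_dconv_image (fun U => (hX U).mp) hlim⟩

/-- For directed spaces `X` and `Y`, a function `f : X → Y` is
topologically continuous iff it is directed continuous (monotone and preserving
all directed limits). -/
theorem stmt_7 {X Y : Type*} [TopologicalSpace X] [TopologicalSpace Y]
    [T0Space X] [T0Space Y]
    (hX : ∀ U : Set X, dOpen X U ↔ IsOpen U)
    (hY : ∀ U : Set Y, dOpen Y U ↔ IsOpen U) (f : X → Y) :
    Continuous f ↔
      ((∀ x y : X, sOrd X x y → sOrd Y (f x) (f y)) ∧
        (∀ (D : Set X) (x : X), dconv X D x → dconv Y (f '' D) (f x))) :=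
  stmt_7_general hX f
end

section
/- If two simple valuations on a T0 space are distinct as formal linear combinations (with distinct support points and positive coefficients), then they are distinct as functions on the lattice of open sets. -/
open Set

open scoped ENNReal
open Classical in
/-- The point valuation `η_x`: `η_x U = 1` if `x ∈ U`, else `0`. -/
noncomputable def pv {X : Type*} (x : X) (U : Set X) : ℝ≥0∞ :=
  if x ∈ U then 1 else 0

open Classical in
/-- The simple valuation `Σ_{b ∈ B} r b · η_b`. -/
noncomputable def simpleVal {X : Type*} (B : Finset X) (r : X → ℝ≥0∞) (U : Set X) : ℝ≥0∞ :=
  ∑ b ∈ B, if b ∈ U then r b else 0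

/-!
Extend the coefficients by zero, so that both valuations become sums `∑_{x ∈ S, x ∈ U} f x` over
the common finite support `S = B ∪ C`. In a T0 space the specialization order on `S` is a
partial order, so `S` has a point `x` that is not in the closure of any other point of `S`;
the complement of the closure of `S \ {x}` is an open set meeting `S` in `{x}` only. Evaluating
both sums on it gives `f x = g x`; cancelling this finite term, induct on `S \ {x}`.
-/

theorem simpleVal_eq_sum_indicator {X : Type*} [DecidableEq X] {B S : Finset X} (hBS : B ⊆ S)
    (r : X → ℝ≥0∞) (U : Set X) :
    simpleVal B r U = ∑ x ∈ S, U.indicator ((↑B : Set X).indicator r) x := by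
  simp_rw [Set.indicator_indicator, Set.inter_comm U, ← Set.indicator_indicator,
    Finset.sum_indicator_subset _ hBS]
  rfl

section

variable {X : Type*} [TopologicalSpace X]

theorem Finset.exists_mem_forall_specializes_eq [T0Space X] {S : Finset X} (hS : S.Nonempty) :
    ∃ x ∈ S, ∀ y ∈ S, y ⤳ x → y = x := by
  obtain ⟨x, hxS, hmax⟩ := S.exists_maximalFor Specialization.toEquiv hS
  refine ⟨x, hxS, fun y hyS hyx => ?_⟩
  have hxy : x ⤳ y :=
    Specialization.toEquiv_le_toEquiv.mp (hmax hyS (Specialization.toEquiv_le_toEquiv.mpr hyx))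
  exact (hyx.antisymm hxy).eq

theorem Finset.exists_isOpen_inter_eq_singleton {S : Finset X} {x : X}
    (hx : ∀ y ∈ S, y ⤳ x → y = x) :
    ∃ U, IsOpen U ∧ x ∈ U ∧ ∀ y ∈ S, y ∈ U → y = x := by
  classical
  refine ⟨(⋃ y ∈ S.erase x, closure {y})ᶜ,
    (isClosed_biUnion_finset fun _ _ => isClosed_closure).isOpen_compl, ?_, ?_⟩
  · simp only [Set.mem_compl_iff, Set.mem_iUnion, not_exists, Finset.mem_erase]
    exact fun y ⟨hyx, hyS⟩ hxy => hyx (hx y hyS (specializes_iff_mem_closure.mpr hxy))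
  · intro y hyS hyU
    by_contra hyx
    exact hyU (Set.mem_biUnion (Finset.mem_erase.mpr ⟨hyx, hyS⟩) (subset_closure rfl))

theorem Finset.eqOn_of_forall_isOpen_sum_indicator_eq [T0Space X] (S : Finset X)
    {f g : X → ℝ≥0∞} (hf : ∀ x ∈ S, f x ≠ ⊤)
    (h : ∀ U, IsOpen U → ∑ x ∈ S, U.indicator f x = ∑ x ∈ S, U.indicator g x) :
    Set.EqOn f g S := by
  classical
  induction S using Finset.strongInduction with
  | H S ih =>
    rcases S.eq_empty_or_nonempty with rfl | hS
    · simp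
    obtain ⟨x, hxS, hx⟩ := S.exists_mem_forall_specializes_eq hS
    obtain ⟨U, hU, hxU, hUS⟩ := S.exists_isOpen_inter_eq_singleton hx
    have sum_eq_at_x : ∀ k : X → ℝ≥0∞, ∑ y ∈ S, U.indicator k y = k x := fun k => by
      rw [Finset.sum_eq_single_of_mem x hxS fun y hyS hyx =>
        Set.indicator_of_notMem (fun hyU => hyx (hUS y hyS hyU)) k]
      exact Set.indicator_of_mem hxU k
    have hfgx : f x = g x := by simpa only [sum_eq_at_x] using h U hU
    have hrest : Set.EqOn f g (S.erase x) := by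
      refine ih _ (S.erase_ssubset hxS) (fun y hy => hf y (Finset.mem_of_mem_erase hy))
        fun V hV => ?_
      have hfin : V.indicator f x ≠ ⊤ := by
        by_cases hxV : x ∈ V <;> simp [hxV, hf x hxS]
      have hVx : V.indicator f x = V.indicator g x := by simp only [Set.indicator_apply, hfgx]
      have hsum := h V hV
      rw [← S.add_sum_erase _ hxS, ← S.add_sum_erase _ hxS, hVx] at hsum
      exact (ENNReal.add_right_inj (hVx ▸ hfin)).mp hsum
    intro y hyS
    by_cases hyx : y = x
    · rw [hyx, hfgx]
    · exact hrest (Finset.mem_erase.mpr ⟨hyx, hyS⟩)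

end

/-- If two simple valuations on a T0 space agree as functions on all
open sets, then they are equal as formal linear combinations (same support and same
coefficients); equivalently, distinct combinations give distinct valuations. -/
theorem stmt_11 {X : Type*} [TopologicalSpace X] [T0Space X]
    (B C : Finset X) (r s : X → ℝ≥0∞)
    (hr : ∀ b ∈ B, 0 < r b ∧ r b ≠ ⊤) (hs : ∀ c ∈ C, 0 < s c ∧ s c ≠ ⊤)
    (h : ∀ U : Set X, IsOpen U → simpleVal B r U = simpleVal C s U) :
    B = C ∧ ∀ b ∈ B, r b = s b := by
  classical
  set f := (↑B : Set X).indicator r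
  set g := (↑C : Set X).indicator s
  have hfg : Set.EqOn f g ↑(B ∪ C) := by
    refine (B ∪ C).eqOn_of_forall_isOpen_sum_indicator_eq (fun x _ => ?_) fun U hU => ?_
    · by_cases hxB : x ∈ B <;> simp [f, hxB, (hr x _).2]
    · rw [← simpleVal_eq_sum_indicator Finset.subset_union_left,
        ← simpleVal_eq_sum_indicator Finset.subset_union_right, h U hU]
  have hfb : ∀ b ∈ B, f b = r b := fun b hb => Set.indicator_of_mem (Finset.mem_coe.mpr hb) r
  have hgc : ∀ c ∈ C, g c = s c := fun c hc => Set.indicator_of_mem (Finset.mem_coe.mpr hc) s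
  have hBC : B ⊆ C := fun b hb => by
    have hgb : g b ≠ 0 := by
      rw [← hfg (Finset.mem_union_left C hb), hfb b hb]; exact (hr b hb).1.ne'
    exact Finset.mem_coe.mp (Set.mem_of_indicator_ne_zero hgb)
  have hCB : C ⊆ B := fun c hc => by
    have hfc : f c ≠ 0 := by
      rw [hfg (Finset.mem_union_right B hc), hgc c hc]; exact (hs c hc).1.ne'
    exact Finset.mem_coe.mp (Set.mem_of_indicator_ne_zero hfc)
  refine ⟨hBC.antisymm hCB, fun b hb => ?_⟩
  rw [← hfb b hb, hfg (Finset.mem_union_left C hb), hgc b (hBC hb)]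
end

section
/- The specialization order of the ⇒_P-convergence topology on the set SV(X) of simple valuations over a directed space X coincides with the pointwise order on valuations. -/
open Set

open scoped ENNReal
/-- The pointwise order on valuations, comparing values on open sets. -/
def svLe {X : Type*} [TopologicalSpace X] (ξ η : Set X → ℝ≥0∞) : Prop :=
  ∀ U : Set X, IsOpen U → ξ U ≤ η U

/-- The set `SV(X)` of simple valuations on `X`. -/
def SVset (X : Type*) [TopologicalSpace X] : Set (Set X → ℝ≥0∞) :=
  {ξ | ∃ (B : Finset X) (r : X → ℝ≥0∞),
    (∀ b ∈ B, 0 < r b ∧ r b ≠ ⊤) ∧ ξ = fun U => simpleVal B r U}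

open Classical in
/-- The simple valuation `Σ_{b ∈ B} r' b · η_{d b}` obtained by moving each support
point `b` to `d b` and shrinking coefficients to `r' b`. -/
noncomputable def shiftVal {X : Type*} (B : Finset X) (d : X → X) (r' : X → ℝ≥0∞)
    (U : Set X) : ℝ≥0∞ :=
  ∑ b ∈ B, if d b ∈ U then r' b else 0

/-- The convergence relation `𝔇 ⇒_P ξ` on simple valuations: `𝔇` is a directed family
of simple valuations, `ξ = Σ_{b∈B} r_b η_b`, there are directed sets `D_b → b` in `X`,
and for every choice `d b ∈ D b` and every `r' b < r b` some member of `𝔇` dominates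
`Σ_{b∈B} r'_b η_{d b}`. -/
def PConv {X : Type*} [TopologicalSpace X] (𝔇 : Set (Set X → ℝ≥0∞))
    (ξ : Set X → ℝ≥0∞) : Prop :=
  𝔇 ⊆ SVset X ∧ 𝔇.Nonempty ∧ DirectedOn svLe 𝔇 ∧
    ∃ (B : Finset X) (r : X → ℝ≥0∞),
      (∀ b ∈ B, 0 < r b ∧ r b ≠ ⊤) ∧ (ξ = fun U => simpleVal B r U) ∧
      ∃ D : X → Set X, (∀ b ∈ B, dconv X (D b) b) ∧
        ∀ d : X → X, (∀ b ∈ B, d b ∈ D b) →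
          ∀ r' : X → ℝ≥0∞, (∀ b ∈ B, r' b < r b) →
            ∃ ξ' ∈ 𝔇, svLe (shiftVal B d r') ξ'

/-- `⇒_P`-convergence open subsets of `SV(X)`. -/
def POpen {X : Type*} [TopologicalSpace X] (𝔘 : Set (Set X → ℝ≥0∞)) : Prop :=
  𝔘 ⊆ SVset X ∧ ∀ 𝔇 ξ, PConv 𝔇 ξ → ξ ∈ 𝔘 → (𝔇 ∩ 𝔘).Nonempty

/-!
If `ξ ≤ η`, the constant family `{η}` `⇒_P`-converges to `ξ` (take `D_b = {b}`), so every
`⇒_P`-open set containing `ξ` meets `{η}`. Conversely, for an open `U` of `X` and `c : ℝ≥0∞`,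
the set of simple valuations with `c < ζ U` is `⇒_P`-open: if `𝔇 ⇒_P ζ` with `c < ζ U`, scale the
coefficients of `ζ` by some `a < 1` keeping `c < a • ζ U`, and pick each `d_b ∈ D_b` inside `U`
whenever `b ∈ U` (possible since `U` is directed open); the member of `𝔇` dominating the moved
valuation then exceeds `c` on `U`. Taking `c = η U` shows `ξ U ≤ η U`.
-/

section

variable {X : Type*}

instance [TopologicalSpace X] : Std.Refl (svLe (X := X)) := ⟨fun _ _ _ => le_rfl⟩

instance [TopologicalSpace X] : Std.Refl (sOrd X) := ⟨fun _ => subset_closure rfl⟩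

theorem dconv_singleton [TopologicalSpace X] (x : X) : dconv X {x} x :=
  ⟨singleton_nonempty x, directedOn_singleton x, fun _ _ hxU => ⟨x, rfl, fun _ he _ => he ▸ hxU⟩⟩

theorem simpleVal_mul_left (B : Finset X) (r : X → ℝ≥0∞) (a : ℝ≥0∞) (U : Set X) :
    simpleVal B (fun b => a * r b) U = a * simpleVal B r U := by
  simp only [simpleVal, Finset.mul_sum, mul_ite, mul_zero]

theorem simpleVal_le_shiftVal {B : Finset X} {d : X → X} {U : Set X}
    (hd : ∀ b ∈ B, b ∈ U → d b ∈ U) (r : X → ℝ≥0∞) :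
    simpleVal B r U ≤ shiftVal B d r U := by
  refine Finset.sum_le_sum fun b hb => ?_
  by_cases hbU : b ∈ U
  · rw [if_pos hbU, if_pos (hd b hb hbU)]
  · rw [if_neg hbU]
    exact zero_le

theorem shiftVal_eq_simpleVal {B : Finset X} {d : X → X} (hd : ∀ b ∈ B, d b = b)
    (r : X → ℝ≥0∞) (U : Set X) : shiftVal B d r U = simpleVal B r U :=
  Finset.sum_congr rfl fun b hb => by rw [hd b hb]

theorem simpleVal_mono {B : Finset X} {r r' : X → ℝ≥0∞} (hr : ∀ b ∈ B, r' b ≤ r b)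
    (U : Set X) : simpleVal B r' U ≤ simpleVal B r U :=
  Finset.sum_le_sum fun b hb => by
    split_ifs
    · exact hr b hb
    · exact le_rfl

theorem pConv_singleton [TopologicalSpace X] {ξ η : Set X → ℝ≥0∞} (hξ : ξ ∈ SVset X)
    (hη : η ∈ SVset X) (hle : svLe ξ η) : PConv {η} ξ := by
  obtain ⟨B, r, hr, rfl⟩ := hξ
  refine ⟨singleton_subset_iff.2 hη, singleton_nonempty η, directedOn_singleton η, B, r, hr, rfl,
    fun x => {x}, fun b _ => dconv_singleton b, fun d hd r' hr' => ⟨η, rfl, fun U hU => ?_⟩⟩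
  calc shiftVal B d r' U = simpleVal B r' U := shiftVal_eq_simpleVal hd r' U
    _ ≤ simpleVal B r U := simpleVal_mono (fun b hb => (hr' b hb).le) U
    _ ≤ η U := hle U hU

theorem exists_mem_and_mem_of_dOpen [TopologicalSpace X] {B : Finset X} {D : X → Set X}
    (hD : ∀ b ∈ B, dconv X (D b) b) {U : Set X} (hU : dOpen X U) :
    ∃ d : X → X, ∀ b ∈ B, d b ∈ D b ∧ (b ∈ U → d b ∈ U) := by
  have h : ∀ b ∈ B, ∃ e, e ∈ D b ∧ (b ∈ U → e ∈ U) := by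
    intro b hb
    by_cases hbU : b ∈ U
    · obtain ⟨e, heD, heU⟩ := hU (D b) b (hD b hb) hbU
      exact ⟨e, heD, fun _ => heU⟩
    · obtain ⟨e, heD⟩ := (hD b hb).1
      exact ⟨e, heD, hbU.elim⟩
  choose! d hd using h
  exact ⟨d, hd⟩

theorem pOpen_setOf_lt_apply [TopologicalSpace X] {U : Set X} (hU : IsOpen U)
    (hUd : dOpen X U) (c : ℝ≥0∞) : POpen {ζ | ζ ∈ SVset X ∧ c < ζ U} := by
  refine ⟨fun ζ hζ => hζ.1, ?_⟩
  rintro 𝔇 ζ ⟨h𝔇, -, -, B, r, hr, rfl, D, hD, hdom⟩ ⟨-, hcζ⟩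
  obtain ⟨a, ha, hca⟩ : ∃ a < 1, c < a * simpleVal B r U := by
    by_contra! h
    exact hcζ.not_ge (ENNReal.le_of_forall_lt_one_mul_le h)
  obtain ⟨d, hd⟩ := exists_mem_and_mem_of_dOpen hD hUd
  have hr' : ∀ b ∈ B, a * r b < r b := fun b hb => by
    simpa using ENNReal.mul_lt_mul_left (hr b hb).1.ne' (hr b hb).2 ha
  obtain ⟨ξ', hξ'𝔇, hξ'⟩ := hdom d (fun b hb => (hd b hb).1) (fun b => a * r b) hr'
  refine ⟨ξ', hξ'𝔇, h𝔇 hξ'𝔇, ?_⟩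
  calc c < a * simpleVal B r U := hca
    _ = simpleVal B (fun b => a * r b) U := (simpleVal_mul_left B r a U).symm
    _ ≤ shiftVal B d (fun b => a * r b) U := simpleVal_le_shiftVal (fun b hb => (hd b hb).2) _
    _ ≤ ξ' U := hξ' U hU

end

theorem stmt_12_general {X : Type*} [TopologicalSpace X]
    (hX : ∀ U : Set X, dOpen X U ↔ IsOpen U)
    (ξ η : Set X → ℝ≥0∞) (hξ : ξ ∈ SVset X) (hη : η ∈ SVset X) :
    (∀ 𝔘 : Set (Set X → ℝ≥0∞), POpen 𝔘 → ξ ∈ 𝔘 → η ∈ 𝔘) ↔ svLe ξ η := by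
  constructor
  · intro h U hU
    by_contra! hlt
    exact (h _ (pOpen_setOf_lt_apply hU ((hX U).2 hU) (η U)) ⟨hξ, hlt⟩).2.false
  · intro hle 𝔘 h𝔘 hξ𝔘
    obtain ⟨ζ, rfl, hζ⟩ := h𝔘.2 {η} ξ (pConv_singleton hξ hη hle) hξ𝔘
    exact hζ

/-- For a directed space `X`, the specialization order of the
`⇒_P`-convergence topology on `SV(X)` coincides with the pointwise order:
`ξ` lies in the closure of `{η}` (every `⇒_P`-open set containing `ξ` contains `η`)
iff `ξ ≤ η` pointwise. -/
theorem stmt_12 {X : Type*} [TopologicalSpace X] [T0Space X]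
    (hX : ∀ U : Set X, dOpen X U ↔ IsOpen U)
    (ξ η : Set X → ℝ≥0∞) (hξ : ξ ∈ SVset X) (hη : η ∈ SVset X) :
    (∀ 𝔘 : Set (Set X → ℝ≥0∞), POpen 𝔘 → ξ ∈ 𝔘 → η ∈ 𝔘) ↔ svLe ξ η :=
  stmt_12_general hX ξ η hξ hη
end

section
/- For a directed space X, the downward closure ↓η = {ξ ∈ SV(X) : ξ ≤ η} of any simple valuation η in the pointwise order is closed in the ⇒_P-convergence topology on SV(X). -/
open Set

open scoped ENNReal
theorem simpleVal_ne_top {X : Type*} {B : Finset X} {r : X → ℝ≥0∞}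
    (hr : ∀ b ∈ B, r b ≠ ⊤) (U : Set X) : simpleVal B r U ≠ ⊤ := by
  classical
  refine (ENNReal.sum_lt_top.mpr fun b hb => ?_).ne
  split
  · exact lt_top_iff_ne_top.mpr (hr b hb)
  · exact ENNReal.zero_lt_top

theorem simpleVal_mul_le_shiftVal {X : Type*} {B : Finset X} {d : X → X} {U : Set X}
    (hdU : ∀ b ∈ B, b ∈ U → d b ∈ U) (r : X → ℝ≥0∞) (t : ℝ≥0∞) :
    simpleVal B r U * t ≤ shiftVal B d (fun b => r b * t) U := by
  classical
  rw [simpleVal, shiftVal, Finset.sum_mul]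
  refine Finset.sum_le_sum fun b hb => ?_
  by_cases hbU : b ∈ U
  · simp only [if_pos hbU, if_pos (hdU b hb hbU), le_refl]
  · simp only [if_neg hbU, zero_mul, zero_le]

theorem dconv.exists_mem_imp_mem {X : Type*} [TopologicalSpace X] {D : Set X} {x : X}
    (hD : dconv X D x) {U : Set X} (hU : IsOpen U) : ∃ y ∈ D, x ∈ U → y ∈ U := by
  by_cases hxU : x ∈ U
  · obtain ⟨y, hyD, hy⟩ := hD.2.2 U hU hxU
    exact ⟨y, hyD, fun _ => hy y hyD (subset_closure rfl)⟩
  · obtain ⟨y, hyD⟩ := hD.1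
    exact ⟨y, hyD, fun h => absurd h hxU⟩

theorem ENNReal.exists_lt_one_lt_mul {a s : ℝ≥0∞} (has : a < s) (hs : s ≠ ⊤) :
    ∃ t < 1, a < s * t := by
  obtain ⟨c, hac, hcs⟩ := exists_between has
  have hs0 : s ≠ 0 := (pos_of_gt has).ne'
  refine ⟨c / s, ?_, ?_⟩
  · rwa [ENNReal.div_lt_iff (Or.inl hs0) (Or.inl hs), one_mul]
  · rwa [ENNReal.mul_div_cancel hs0 hs]

/-- Moving each support point `b ∈ U` into `U` along `D b → b` keeps its mass on `U`, and
scaling all coefficients by a single `t < 1` close to `1` loses less than the slack `ξ U - a`. -/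
theorem PConv.exists_lt_apply {X : Type*} [TopologicalSpace X]
    {𝔇 : Set (Set X → ℝ≥0∞)} {ξ : Set X → ℝ≥0∞} (h : PConv 𝔇 ξ)
    {U : Set X} (hU : IsOpen U) {a : ℝ≥0∞} (ha : a < ξ U) : ∃ ξ' ∈ 𝔇, a < ξ' U := by
  obtain ⟨-, -, -, B, r, hr, rfl, D, hD, hdom⟩ := h
  obtain ⟨t, ht1, hat⟩ :=
    ENNReal.exists_lt_one_lt_mul ha (simpleVal_ne_top (fun b hb => (hr b hb).2) U)
  have hmove : ∀ b, ∃ y, b ∈ B → y ∈ D b ∧ (b ∈ U → y ∈ U) := by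
    intro b
    by_cases hb : b ∈ B
    · obtain ⟨y, hyD, hyU⟩ := (hD b hb).exists_mem_imp_mem hU
      exact ⟨y, fun _ => ⟨hyD, hyU⟩⟩
    · exact ⟨b, fun h => absurd h hb⟩
  choose d hd using hmove
  have hshrink : ∀ b ∈ B, r b * t < r b := fun b hb => by
    simpa only [mul_one] using (ENNReal.mul_lt_mul_iff_right (hr b hb).1.ne' (hr b hb).2).mpr ht1
  obtain ⟨ξ', hξ', hle⟩ := hdom d (fun b hb => (hd b hb).1) (fun b => r b * t) hshrink
  refine ⟨ξ', hξ', ?_⟩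
  calc a < simpleVal B r U * t := hat
    _ ≤ shiftVal B d (fun b => r b * t) U :=
        simpleVal_mul_le_shiftVal (fun b hb => (hd b hb).2) r t
    _ ≤ ξ' U := hle U hU

theorem stmt_13_general {X : Type*} [TopologicalSpace X]
    (η : Set X → ℝ≥0∞) :
    POpen {ξ ∈ SVset X | ¬ svLe ξ η} := by
  refine ⟨fun ξ hξ => hξ.1, ?_⟩
  rintro 𝔇 ξ h𝔇 ⟨-, hξη⟩
  obtain ⟨U, hU, hlt⟩ : ∃ U, IsOpen U ∧ η U < ξ U := by
    simpa only [svLe, not_forall, not_le, exists_prop] using hξη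
  obtain ⟨ξ', hξ', hηξ'⟩ := h𝔇.exists_lt_apply hU hlt
  exact ⟨ξ', hξ', h𝔇.1 hξ', fun hle => (hle U hU).not_gt hηξ'⟩

/-- For a directed space `X`, the downward closure
`↓η = {ξ ∈ SV(X) : ξ ≤ η}` of a simple valuation `η` in the pointwise order is closed
in the `⇒_P`-convergence topology, i.e. its complement in `SV(X)` is `⇒_P`-open. -/
theorem stmt_13 {X : Type*} [TopologicalSpace X] [T0Space X]
    (hX : ∀ U : Set X, dOpen X U ↔ IsOpen U)
    (η : Set X → ℝ≥0∞) (hη : η ∈ SVset X) :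
    POpen {ξ ∈ SVset X | ¬ svLe ξ η} :=
  stmt_13_general η
end

section
/- Scalar multiplication is continuous in the scalar variable: if ξ = Σ_{i=1}^n r_{b_i} η_{b_i} is a simple valuation and D ⊆ ℝ+ is a directed set of nonnegative reals with sup D = a, then the directed family {d·ξ : d ∈ D} ⇒_P (a·ξ). -/
open Set

open scoped ENNReal
open scoped NNReal

lemma lub_mul {D : Set ℝ≥0} {a : ℝ≥0} (ha : IsLUB D a) {c x : ℝ≥0∞}
    (hc0 : c ≠ 0) (hct : c ≠ ⊤) (hx : x < (a : ℝ≥0∞) * c) :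
    ∃ e ∈ D, x ≤ (e : ℝ≥0∞) * c := by
  by_contra h
  push_neg at h
  have hxt : x ≠ ⊤ := hx.ne_top
  have hdt : x / c ≠ ⊤ := (ENNReal.div_lt_top hxt hc0).ne
  have hub : (x / c).toNNReal ∈ upperBounds D := by
    intro e he
    have : (e : ℝ≥0∞) ≤ x / c := (ENNReal.le_div_iff_mul_le (Or.inl hc0) (Or.inl hct)).2 (h e he).le
    rwa [← ENNReal.coe_toNNReal hdt, ENNReal.coe_le_coe] at this
  have : (a : ℝ≥0∞) ≤ x / c := by
    rw [← ENNReal.coe_toNNReal hdt, ENNReal.coe_le_coe]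
    exact ha.2 hub
  have := (ENNReal.le_div_iff_mul_le (Or.inl hc0) (Or.inl hct)).1 this
  exact absurd hx (not_lt.2 this)

lemma exists_ub {D : Set ℝ≥0} (hne : D.Nonempty) (hdir : DirectedOn (· ≤ ·) D)
    {X : Type*} (B : Finset X) (f : X → ℝ≥0) (hf : ∀ b ∈ B, f b ∈ D) :
    ∃ e ∈ D, ∀ b ∈ B, f b ≤ e := by
  classical
  induction B using Finset.induction with
  | empty => exact ⟨hne.choose, hne.choose_spec, by simp⟩
  | @insert c s hc ih =>
    obtain ⟨e, he, hse⟩ := ih (fun b hb => hf b (Finset.mem_insert_of_mem hb))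
    obtain ⟨e', he', h1, h2⟩ := hdir _ (hf c (Finset.mem_insert_self c s)) _ he
    refine ⟨e', he', fun b hb => ?_⟩
    rcases Finset.mem_insert.1 hb with rfl | hb
    · exact h1
    · exact (hse b hb).trans h2

open Classical in
lemma mul_simpleVal {X : Type*} (B : Finset X) (r : X → ℝ≥0∞) (c : ℝ≥0∞) (U : Set X) :
    c * simpleVal B r U = simpleVal B (fun b => c * r b) U := by
  unfold simpleVal
  rw [Finset.mul_sum]
  refine Finset.sum_congr rfl fun b _ => ?_
  split <;> simp

lemma trivial_dconv {X : Type*} [TopologicalSpace X] (b : X) : dconv X {b} b := by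
  refine ⟨⟨b, rfl⟩, fun x hx y hy => ?_, fun U hU hb => ⟨b, rfl, fun e he _ => he ▸ hb⟩⟩
  rw [Set.mem_singleton_iff] at hx hy
  exact ⟨b, rfl, by rw [hx]; exact subset_closure rfl, by rw [hy]; exact subset_closure rfl⟩


/-- Scalar multiplication is continuous in the scalar variable: if
`ξ = Σ r_b η_b` is a simple valuation and `D ⊆ ℝ⁺` is a directed set of nonnegative
reals with `sup D = a`, then `{d·ξ : d ∈ D} ⇒_P a·ξ`. -/
theorem stmt_15 {X : Type*} [TopologicalSpace X] [T0Space X]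
    (hX : ∀ U : Set X, dOpen X U ↔ IsOpen U)
    (B : Finset X) (r : X → ℝ≥0∞) (hr : ∀ b ∈ B, 0 < r b ∧ r b ≠ ⊤)
    (D : Set ℝ≥0) (hne : D.Nonempty) (hdir : DirectedOn (· ≤ ·) D)
    (a : ℝ≥0) (ha : IsLUB D a) :
    PConv ((fun d : ℝ≥0 => fun U : Set X => (d : ℝ≥0∞) * simpleVal B r U) '' D)
      (fun U => (a : ℝ≥0∞) * simpleVal B r U) := by

  classical
  refine ⟨?_, (Set.image_nonempty).2 hne, ?_, ?_⟩
  · -- each d·ξ is a simple valuation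
    rintro _ ⟨d, hd, rfl⟩
    by_cases hd0 : d = 0
    · refine ⟨∅, r, by simp, ?_⟩
      funext U
      simp [hd0, simpleVal]
    · refine ⟨B, fun b => (d : ℝ≥0∞) * r b, fun b hb => ?_, ?_⟩
      · obtain ⟨h1, h2⟩ := hr b hb
        exact ⟨ENNReal.mul_pos (by exact_mod_cast hd0) h1.ne', ENNReal.mul_ne_top ENNReal.coe_ne_top h2⟩
      · funext U
        exact mul_simpleVal B r _ U
  · -- directedness
    rintro _ ⟨d, hd, rfl⟩ _ ⟨e, he, rfl⟩
    obtain ⟨f, hf, hdf, hef⟩ := hdir d hd e he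
    refine ⟨_, ⟨f, hf, rfl⟩, fun U _ => ?_, fun U _ => ?_⟩
    · exact mul_le_mul_left (ENNReal.coe_le_coe.2 hdf) _
    · exact mul_le_mul_left (ENNReal.coe_le_coe.2 hef) _
  by_cases ha0 : a = 0
  · -- a = 0 : target is the zero valuation, empty support
    refine ⟨∅, r, by simp, ?_, fun _ => ∅, by simp, ?_⟩
    · funext U
      simp [ha0, simpleVal]
    · intro d _ r' _
      obtain ⟨e, he⟩ := hne
      refine ⟨_, ⟨e, he, rfl⟩, fun U _ => ?_⟩
      simp [shiftVal]
  · refine ⟨B, fun b => (a : ℝ≥0∞) * r b, fun b hb => ?_, ?_, fun b => {b},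
      fun b _ => trivial_dconv b, ?_⟩
    · obtain ⟨h1, h2⟩ := hr b hb
      exact ⟨ENNReal.mul_pos (by exact_mod_cast ha0) h1.ne', ENNReal.mul_ne_top ENNReal.coe_ne_top h2⟩
    · funext U
      exact mul_simpleVal B r _ U
    · intro d hd r' hr'
      -- for each b choose e_b ∈ D with r' b ≤ e_b * r b, then an upper bound e
      have hchoice : ∀ b ∈ B, ∃ e ∈ D, r' b ≤ (e : ℝ≥0∞) * r b := by
        intro b hb
        exact lub_mul ha (hr b hb).1.ne' (hr b hb).2 (hr' b hb)
      choose! f hfD hfle using hchoice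
      obtain ⟨e, heD, hub⟩ := exists_ub hne hdir B f hfD
      refine ⟨_, ⟨e, heD, rfl⟩, fun U _ => ?_⟩
      show shiftVal B d r' U ≤ (e : ℝ≥0∞) * simpleVal B r U
      unfold shiftVal
      rw [mul_simpleVal]
      unfold simpleVal
      refine Finset.sum_le_sum fun b hb => ?_
      have hdb : d b = b := hd b hb
      rw [hdb]
      split
      · exact (hfle b hb).trans (mul_le_mul_left (ENNReal.coe_le_coe.2 (hub b hb)) _)
      · exact le_refl 0
end

section
/- For simple valuations on a c-space X, the way-below-style relation ≪' (defined via a splitting with strict inequalities and interiors of upper sets) satisfies interpolation-by-order: if ξ ≪' μ and μ ≤ ν pointwise, then ξ ≪' ν. -/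
open Set

open scoped ENNReal
/-- A c-space: for each `x` in an open set `U` there is `y ∈ U` with
`x ∈ int(↑y) ⊆ U`, where `↑y` is the upper set of `y` in the specialization order. -/
def cSpace (X : Type*) [TopologicalSpace X] : Prop :=
  ∀ (U : Set X) (x : X), IsOpen U → x ∈ U →
    ∃ y ∈ U, x ∈ interior {z | sOrd X y z} ∧ interior {z | sOrd X y z} ⊆ U

/-- The strict splitting relation `μ ≪' ν` on simple valuations
`μ = Σ_{b∈B} r_b η_b`, `ν = Σ_{c∈C} s_c η_c`: there is a matrix `t_{b,c} ≥ 0` with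
`Σ_c t_{b,c} = r_b`, `Σ_b t_{b,c} < s_c`, and `t_{b,c} ≠ 0 → c ∈ int(↑b)`. -/
def strictSplit {X : Type*} [TopologicalSpace X]
    (B : Finset X) (r : X → ℝ≥0∞) (C : Finset X) (s : X → ℝ≥0∞) : Prop :=
  ∃ t : X → X → ℝ≥0∞,
    (∀ b ∈ B, ∀ c ∈ C, t b c ≠ ⊤) ∧
    (∀ b ∈ B, ∑ c ∈ C, t b c = r b) ∧
    (∀ c ∈ C, ∑ b ∈ B, t b c < s c) ∧
    (∀ b ∈ B, ∀ c ∈ C, t b c ≠ 0 → c ∈ interior {z | sOrd X b z})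

open Finset

open Classical in
noncomputable def RC {X : Type*} (C : Finset X) (R : X → X → Prop) (A : Finset X) : Finset X :=
  C.filter (fun c => ∃ b ∈ A, R b c)

lemma mem_RC {X : Type*} {C : Finset X} {R : X → X → Prop} {A : Finset X} {c : X} :
    c ∈ RC C R A ↔ c ∈ C ∧ ∃ b ∈ A, R b c := by
  classical simp [RC]

lemma RC_mono {X : Type*} (C : Finset X) (R : X → X → Prop) {A A' : Finset X} (h : A ⊆ A') :
    RC C R A ⊆ RC C R A' := by
  intro c hc
  rw [mem_RC] at *
  obtain ⟨hC, b, hb, hR⟩ := hc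
  exact ⟨hC, b, h hb, hR⟩

lemma RC_union {X : Type*} [DecidableEq X] (C : Finset X) (R : X → X → Prop) (A A' : Finset X) :
    RC C R (A ∪ A') = RC C R A ∪ RC C R A' := by
  ext c
  simp only [mem_RC, Finset.mem_union]
  constructor
  · rintro ⟨hC, b, hb | hb, hR⟩
    · exact Or.inl ⟨hC, b, hb, hR⟩
    · exact Or.inr ⟨hC, b, hb, hR⟩
  · rintro (⟨hC, b, hb, hR⟩ | ⟨hC, b, hb, hR⟩)
    exacts [⟨hC, b, Or.inl hb, hR⟩, ⟨hC, b, Or.inr hb, hR⟩]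

lemma RC_empty {X : Type*} (C : Finset X) (R : X → X → Prop) : RC C R ∅ = ∅ := by
  ext c; simp [mem_RC]

lemma sum_same {X : Type*} [DecidableEq X] (A : Finset X) (n : X → ℕ) (b₀ : X) (hb : b₀ ∉ A) :
    ∑ b ∈ A, (if b = b₀ then n b - 1 else n b) = ∑ b ∈ A, n b :=
  Finset.sum_congr rfl fun b hbA => if_neg (fun h => hb (by rw [← h]; exact hbA))

lemma sum_dec {X : Type*} [DecidableEq X] (A : Finset X) (n : X → ℕ) (b₀ : X)
    (hb : b₀ ∈ A) (h1 : n b₀ ≠ 0) :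
    ∑ b ∈ A, (if b = b₀ then n b - 1 else n b) + 1 = ∑ b ∈ A, n b := by
  have h0 : (if b₀ = b₀ then n b₀ - 1 else n b₀) = n b₀ - 1 := if_pos rfl
  have h1' := Finset.add_sum_erase A (fun b => if b = b₀ then n b - 1 else n b) hb
  have h2 := Finset.add_sum_erase A n hb
  have h3 := sum_same (A.erase b₀) n b₀ (Finset.notMem_erase _ _)
  beta_reduce at h1'
  omega

lemma int_flow {X : Type*} [DecidableEq X] (B C : Finset X) (R : X → X → Prop) :
    ∀ (k : ℕ) (n m : X → ℕ), (∑ b ∈ B, n b = k) →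
    (∀ A ⊆ B, ∑ b ∈ A, n b ≤ ∑ c ∈ RC C R A, m c) →
    ∃ T : X → X → ℕ,
      (∀ b ∈ B, ∑ c ∈ C, T b c = n b) ∧
      (∀ c ∈ C, ∑ b ∈ B, T b c ≤ m c) ∧
      (∀ b c, T b c ≠ 0 → b ∈ B ∧ c ∈ C ∧ R b c) := by
  intro k
  induction k with
  | zero =>
    intro n m hsum _
    refine ⟨fun _ _ => 0, fun b hb => ?_, fun c _ => by simp, fun b c h => absurd rfl h⟩
    simp only [Finset.sum_const_zero]
    exact ((Finset.sum_eq_zero_iff).mp hsum b hb).symm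
  | succ k IH =>
    intro n m hsum hall
    have hex : ∃ b₀ ∈ B, n b₀ ≠ 0 := by
      by_contra h
      push_neg at h
      rw [Finset.sum_eq_zero h] at hsum
      omega
    obtain ⟨b₀, hb₀B, hb₀⟩ := hex
    set P : Finset (Finset X) :=
      (B.erase b₀).powerset.filter (fun A => ∑ b ∈ A, n b = ∑ c ∈ RC C R A, m c) with hP
    have hPmem : ∀ A ∈ P, A ⊆ B.erase b₀ ∧ ∑ b ∈ A, n b = ∑ c ∈ RC C R A, m c := by
      intro A hA
      rw [hP, Finset.mem_filter, Finset.mem_powerset] at hA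
      exact hA
    have hkey : P.sup id ⊆ B.erase b₀ ∧ ∑ b ∈ P.sup id, n b = ∑ c ∈ RC C R (P.sup id), m c := by
      refine Finset.sup_induction
        (p := fun A : Finset X => A ⊆ B.erase b₀ ∧ ∑ b ∈ A, n b = ∑ c ∈ RC C R A, m c)
        ?_ ?_ (fun A hA => ⟨(hPmem A hA).1, (hPmem A hA).2⟩)
      · constructor
        · simp [Finset.bot_eq_empty]
        · simp [Finset.bot_eq_empty, RC_empty]
      · rintro A ⟨hA1, hA2⟩ A' ⟨hA'1, hA'2⟩
        rw [Finset.sup_eq_union]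
        refine ⟨Finset.union_subset hA1 hA'1, ?_⟩
        have e1 : ∑ b ∈ A ∪ A', n b + ∑ b ∈ A ∩ A', n b = ∑ b ∈ A, n b + ∑ b ∈ A', n b :=
          Finset.sum_union_inter
        have e2 : ∑ c ∈ RC C R A ∪ RC C R A', m c + ∑ c ∈ RC C R A ∩ RC C R A', m c
            = ∑ c ∈ RC C R A, m c + ∑ c ∈ RC C R A', m c := Finset.sum_union_inter
        have hsub : RC C R (A ∩ A') ⊆ RC C R A ∩ RC C R A' :=
          Finset.subset_inter (RC_mono C R Finset.inter_subset_left)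
            (RC_mono C R Finset.inter_subset_right)
        have e3 : ∑ c ∈ RC C R (A ∩ A'), m c ≤ ∑ c ∈ RC C R A ∩ RC C R A', m c :=
          Finset.sum_le_sum_of_subset hsub
        have hABe : A ∪ A' ⊆ B := (Finset.union_subset hA1 hA'1).trans (Finset.erase_subset _ _)
        have h4 : ∑ b ∈ A ∪ A', n b ≤ ∑ c ∈ RC C R (A ∪ A'), m c := hall _ hABe
        have h5 : ∑ b ∈ A ∩ A', n b ≤ ∑ c ∈ RC C R (A ∩ A'), m c :=
          hall _ ((Finset.inter_subset_left.trans hA1).trans (Finset.erase_subset _ _))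
        rw [RC_union] at h4
        rw [RC_union]
        omega
    set Astar : Finset X := P.sup id with hAstar
    obtain ⟨hAstar_sub, hAstar_tight⟩ := hkey
    have hb₀A : b₀ ∉ Astar := fun h => (Finset.mem_erase.mp (hAstar_sub h)).1 rfl
    have hins : insert b₀ Astar ⊆ B :=
      Finset.insert_subset hb₀B (hAstar_sub.trans (Finset.erase_subset _ _))
    have hhall := hall _ hins
    rw [Finset.sum_insert hb₀A] at hhall
    have hRCins : RC C R (insert b₀ Astar) = RC C R Astar ∪ (RC C R {b₀} \ RC C R Astar) := by
      rw [Finset.union_sdiff_self_eq_union]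
      rw [show insert b₀ Astar = {b₀} ∪ Astar from rfl, RC_union, Finset.union_comm]
    rw [hRCins, Finset.sum_union Finset.disjoint_sdiff] at hhall
    have hc₀ : ∃ c₀ ∈ RC C R {b₀} \ RC C R Astar, m c₀ ≠ 0 := by
      by_contra h
      push_neg at h
      rw [Finset.sum_eq_zero h] at hhall
      omega
    obtain ⟨c₀, hc₀mem, hmc₀⟩ := hc₀
    rw [Finset.mem_sdiff] at hc₀mem
    obtain ⟨hc₀b₀, hc₀nA⟩ := hc₀mem
    have hc₀C : c₀ ∈ C := (mem_RC.mp hc₀b₀).1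
    have hRb₀c₀ : R b₀ c₀ := by
      obtain ⟨-, b, hb, hR⟩ := mem_RC.mp hc₀b₀
      rwa [Finset.mem_singleton.mp hb] at hR
    -- the decremented problem
    have hsum' : ∑ b ∈ B, (if b = b₀ then n b - 1 else n b) = k := by
      have := sum_dec B n b₀ hb₀B hb₀
      omega
    have hall2 : ∀ A ⊆ B, ∑ b ∈ A, (if b = b₀ then n b - 1 else n b)
        ≤ ∑ c ∈ RC C R A, (if c = c₀ then m c - 1 else m c) := by
      intro A hAB
      have hA := hall A hAB
      by_cases hbA : b₀ ∈ A
      · have hc₀RA : c₀ ∈ RC C R A := mem_RC.mpr ⟨hc₀C, b₀, hbA, hRb₀c₀⟩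
        have e1 := sum_dec A n b₀ hbA hb₀
        have e2 := sum_dec (RC C R A) m c₀ hc₀RA hmc₀
        omega
      · have e1 := sum_same A n b₀ hbA
        by_cases hcA : c₀ ∈ RC C R A
        · have hAe : A ⊆ B.erase b₀ := fun x hx =>
            Finset.mem_erase.mpr ⟨fun h => hbA (h ▸ hx), hAB hx⟩
          have hnt : ∑ b ∈ A, n b ≠ ∑ c ∈ RC C R A, m c := by
            intro ht
            have hAP : A ∈ P := by
              rw [hP, Finset.mem_filter, Finset.mem_powerset]; exact ⟨hAe, ht⟩
            exact hc₀nA (RC_mono C R (Finset.le_sup (f := id) hAP) hcA)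
          have e2 := sum_dec (RC C R A) m c₀ hcA hmc₀
          omega
        · have e2 := sum_same (RC C R A) m c₀ hcA
          omega
    obtain ⟨T', hT'row, hT'col, hT'supp⟩ :=
      IH (fun b => if b = b₀ then n b - 1 else n b) (fun c => if c = c₀ then m c - 1 else m c)
        hsum' hall2
    refine ⟨fun b c => T' b c + (if b = b₀ then (if c = c₀ then 1 else 0) else 0), ?_, ?_, ?_⟩
    · intro b hb
      have hrow := hT'row b hb
      beta_reduce at hrow
      rw [Finset.sum_add_distrib]
      by_cases hbb : b = b₀
      · rw [show (∑ c ∈ C, if b = b₀ then (if c = c₀ then (1:ℕ) else 0) else 0)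
            = ∑ c ∈ C, (if c = c₀ then (1:ℕ) else 0) from
          Finset.sum_congr rfl fun c _ => if_pos hbb]
        rw [Finset.sum_ite_eq' C c₀ (fun _ => 1), if_pos hc₀C]
        rw [if_pos hbb] at hrow
        have hnb : n b ≠ 0 := by rw [hbb]; exact hb₀
        omega
      · rw [show (∑ c ∈ C, if b = b₀ then (if c = c₀ then (1:ℕ) else 0) else 0) = 0 from
          Finset.sum_eq_zero fun c _ => if_neg hbb]
        rw [if_neg hbb] at hrow
        omega
    · intro c hc
      have hcol := hT'col c hc
      beta_reduce at hcol
      rw [Finset.sum_add_distrib]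
      by_cases hcc : c = c₀
      · rw [show (∑ b ∈ B, if b = b₀ then (if c = c₀ then (1:ℕ) else 0) else 0)
            = ∑ b ∈ B, (if b = b₀ then (1:ℕ) else 0) from
          Finset.sum_congr rfl fun b _ => by rw [if_pos hcc]]
        rw [Finset.sum_ite_eq' B b₀ (fun _ => 1), if_pos hb₀B]
        rw [if_pos hcc] at hcol
        have hmc : m c ≠ 0 := by rw [hcc]; exact hmc₀
        omega
      · rw [show (∑ b ∈ B, if b = b₀ then (if c = c₀ then (1:ℕ) else 0) else 0) = 0 from
          Finset.sum_eq_zero fun b _ => by rw [if_neg hcc, ite_self]]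
        rw [if_neg hcc] at hcol
        omega
    · intro b c hT
      by_cases h0 : T' b c = 0
      · by_cases h1 : b = b₀
        · by_cases h2 : c = c₀
          · exact ⟨by rw [h1]; exact hb₀B, by rw [h2]; exact hc₀C, by rw [h1, h2]; exact hRb₀c₀⟩
          · exact absurd (show T' b c + (if b = b₀ then (if c = c₀ then 1 else 0) else 0) = 0 by
              rw [h0, if_pos h1, if_neg h2]) hT
        · exact absurd (show T' b c + (if b = b₀ then (if c = c₀ then 1 else 0) else 0) = 0 by
            rw [h0, if_neg h1]) hT
      · exact hT'supp b c h0

open scoped NNReal ENNReal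

lemma nnreal_flow {X : Type*} (B C : Finset X) (R : X → X → Prop)
    (ρ σ : X → ℝ≥0) (hσ : ∀ c ∈ C, 0 < σ c)
    (hall : ∀ A ⊆ B, A.Nonempty → ∑ b ∈ A, ρ b < ∑ c ∈ RC C R A, σ c) :
    ∃ t : X → X → ℝ≥0,
      (∀ b ∈ B, ∑ c ∈ C, t b c = ρ b) ∧
      (∀ c ∈ C, ∑ b ∈ B, t b c < σ c) ∧
      (∀ b c, t b c ≠ 0 → b ∈ B ∧ c ∈ C ∧ R b c) := by
  classical
  rcases B.eq_empty_or_nonempty with hB | hB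
  · refine ⟨fun _ _ => 0, ?_, ?_, ?_⟩
    · intro b hb; rw [hB] at hb; exact absurd hb (Finset.notMem_empty b)
    · intro c hc; simpa using hσ c hc
    · intro b c h; exact absurd rfl h
  -- the minimal gap
  set P : Finset (Finset X) := B.powerset.filter Finset.Nonempty with hPdef
  have hPne : P.Nonempty := ⟨B, by simp [hPdef, Finset.mem_filter, Finset.mem_powerset, hB]⟩
  set gap : Finset X → ℝ := fun A => (∑ c ∈ RC C R A, (σ c : ℝ)) - ∑ b ∈ A, (ρ b : ℝ) with hgapdef
  have hgapP : ∀ A ∈ P, 0 < gap A := by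
    intro A hA
    rw [hPdef, Finset.mem_filter, Finset.mem_powerset] at hA
    have := hall A hA.1 hA.2
    rw [← NNReal.coe_lt_coe, NNReal.coe_sum, NNReal.coe_sum] at this
    simp only [hgapdef]
    linarith
  set g : ℝ := P.inf' hPne gap with hgdef
  have hg : 0 < g := by
    rw [hgdef, Finset.lt_inf'_iff]
    exact hgapP
  have hexN : ∃ N : ℕ, 1 ≤ N ∧ (B.card + C.card : ℝ) ≤ N * g := by
    obtain ⟨N₀, hN₀⟩ := exists_nat_ge ((B.card + C.card : ℝ) / g)
    refine ⟨N₀ + 1, Nat.le_add_left 1 N₀, ?_⟩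
    rw [div_le_iff₀ hg] at hN₀
    have h2 : (N₀ : ℝ) * g ≤ ((N₀ + 1 : ℕ) : ℝ) * g := by
      apply mul_le_mul_of_nonneg_right _ hg.le
      exact_mod_cast Nat.le_succ N₀
    linarith
  obtain ⟨N, hN1, hNg⟩ := hexN
  have hexn : ∃ n : X → ℕ, (∀ b, 0 < n b) ∧ (∀ b, (ρ b : ℝ) * N < n b) ∧
      (∀ b, (n b : ℝ) ≤ (ρ b : ℝ) * N + 1) := by
    refine ⟨fun b => ⌊(ρ b : ℝ) * N⌋₊ + 1, fun b => Nat.succ_pos _, fun b => ?_, fun b => ?_⟩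
    · push_cast
      exact Nat.lt_floor_add_one _
    · push_cast
      have := Nat.floor_le (by positivity : (0:ℝ) ≤ (ρ b : ℝ) * N)
      linarith
  obtain ⟨n, hnpos, hnlt, hnle⟩ := hexn
  have hexm : ∃ m : X → ℕ, (∀ c ∈ C, (m c : ℝ) < (σ c : ℝ) * N) ∧
      (∀ c, (σ c : ℝ) * N - 1 ≤ (m c : ℝ)) := by
    refine ⟨fun c => ⌈(σ c : ℝ) * N⌉₊ - 1, fun c hc => ?_, fun c => ?_⟩
    · beta_reduce
      have hx : (0:ℝ) < (σ c : ℝ) * N := by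
        have h1 : (0:ℝ) < σ c := by exact_mod_cast hσ c hc
        have h2 : (0:ℝ) < N := by
          have : (1:ℝ) ≤ N := by exact_mod_cast hN1
          linarith
        positivity
      rcases Nat.eq_zero_or_pos ⌈(σ c : ℝ) * N⌉₊ with h | h
      · rw [h]; simpa using hx
      · rw [Nat.cast_sub h]
        have := Nat.ceil_lt_add_one (le_of_lt hx)
        push_cast
        linarith
    · beta_reduce
      rcases Nat.eq_zero_or_pos ⌈(σ c : ℝ) * N⌉₊ with h | h
      · have hle : (σ c : ℝ) * N ≤ 0 := by
          by_contra hcon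
          push_neg at hcon
          have := Nat.ceil_pos.mpr hcon
          omega
        rw [h]
        norm_num
        linarith
      · rw [Nat.cast_sub h]
        have := Nat.le_ceil ((σ c : ℝ) * N)
        push_cast
        linarith
  obtain ⟨m, hmlt, hmge⟩ := hexm
  have key : ∀ A ⊆ B, ∑ b ∈ A, n b ≤ ∑ c ∈ RC C R A, m c := by
    intro A hAB
    rcases A.eq_empty_or_nonempty with h | h
    · subst h; simp
    · have hgA : g ≤ gap A := by
        rw [hgdef]
        exact Finset.inf'_le _ (by
          rw [hPdef, Finset.mem_filter, Finset.mem_powerset]; exact ⟨hAB, h⟩)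
      rw [← Nat.cast_le (α := ℝ)]
      push_cast
      have h1 : ∑ b ∈ A, ((n b : ℝ)) ≤ (∑ b ∈ A, (ρ b : ℝ)) * N + A.card := by
        calc ∑ b ∈ A, ((n b : ℝ)) ≤ ∑ b ∈ A, ((ρ b : ℝ) * N + 1) :=
              Finset.sum_le_sum (fun b _ => hnle b)
          _ = (∑ b ∈ A, (ρ b : ℝ)) * N + A.card := by
              rw [Finset.sum_add_distrib, ← Finset.sum_mul, Finset.sum_const, nsmul_eq_mul,
                mul_one]
      have h2 : (∑ c ∈ RC C R A, (σ c : ℝ)) * N - (RC C R A).card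
          ≤ ∑ c ∈ RC C R A, ((m c : ℝ)) := by
        calc (∑ c ∈ RC C R A, (σ c : ℝ)) * N - (RC C R A).card
            = ∑ c ∈ RC C R A, ((σ c : ℝ) * N - 1) := by
              rw [Finset.sum_sub_distrib, ← Finset.sum_mul, Finset.sum_const, nsmul_eq_mul,
                mul_one]
          _ ≤ ∑ c ∈ RC C R A, ((m c : ℝ)) := Finset.sum_le_sum (fun c _ => hmge c)
      have hcardA : (A.card : ℝ) ≤ B.card := by exact_mod_cast Finset.card_le_card hAB
      have hcardRC : ((RC C R A).card : ℝ) ≤ C.card := by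
        have : RC C R A ⊆ C := fun c hc => (mem_RC.mp hc).1
        exact_mod_cast Finset.card_le_card this
      have h3 : (N : ℝ) * g ≤ N * ((∑ c ∈ RC C R A, (σ c : ℝ)) - ∑ b ∈ A, (ρ b : ℝ)) := by
        apply mul_le_mul_of_nonneg_left _ (by positivity)
        simpa [hgapdef] using hgA
      push_cast at h1 h2
      linarith
  obtain ⟨T, hTrow, hTcol, hTsupp⟩ := int_flow B C R (∑ b ∈ B, n b) n m rfl key
  have hNne : ((N : ℝ≥0)) ≠ 0 := by
    exact_mod_cast Nat.one_le_iff_ne_zero.mp hN1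
  have hNpos : (0:ℝ≥0) < (N : ℝ≥0) := zero_lt_iff.mpr hNne
  refine ⟨fun b c => (T b c : ℝ≥0) * ρ b / (n b : ℝ≥0), ?_, ?_, ?_⟩
  · intro b hb
    have hne : ((n b : ℝ≥0)) ≠ 0 := by
      exact_mod_cast Nat.pos_iff_ne_zero.mp (hnpos b)
    rw [← Finset.sum_div, ← Finset.sum_mul]
    have hcast : ∑ c ∈ C, (T b c : ℝ≥0) = ((n b : ℕ) : ℝ≥0) := by
      rw [← Nat.cast_sum, hTrow b hb]
    rw [hcast, mul_comm, mul_div_assoc, div_self hne, mul_one]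
  · intro c hc
    have step1 : ∀ b, (T b c : ℝ≥0) * ρ b / (n b : ℝ≥0) ≤ (T b c : ℝ≥0) / (N : ℝ≥0) := by
      intro b
      have hne : ((n b : ℝ≥0)) ≠ 0 := by
        exact_mod_cast Nat.pos_iff_ne_zero.mp (hnpos b)
      have hρn : ρ b / (n b : ℝ≥0) ≤ 1 / (N : ℝ≥0) := by
        rw [div_le_div_iff₀ (zero_lt_iff.mpr hne) hNpos]
        have h := (hnlt b).le
        rw [← NNReal.coe_le_coe]
        push_cast
        linarith
      calc (T b c : ℝ≥0) * ρ b / (n b : ℝ≥0) = (T b c : ℝ≥0) * (ρ b / (n b : ℝ≥0)) := by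
            rw [mul_div_assoc]
        _ ≤ (T b c : ℝ≥0) * (1 / (N : ℝ≥0)) := mul_le_mul_right hρn _
        _ = (T b c : ℝ≥0) / (N : ℝ≥0) := by rw [mul_one_div]
    calc ∑ b ∈ B, (T b c : ℝ≥0) * ρ b / (n b : ℝ≥0)
        ≤ ∑ b ∈ B, (T b c : ℝ≥0) / (N : ℝ≥0) := Finset.sum_le_sum (fun b _ => step1 b)
      _ = (∑ b ∈ B, (T b c : ℝ≥0)) / (N : ℝ≥0) := by rw [Finset.sum_div]
      _ ≤ ((m c : ℕ) : ℝ≥0) / (N : ℝ≥0) := by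
          gcongr
          exact_mod_cast hTcol c hc
      _ < σ c := by
          rw [div_lt_iff₀ hNpos]
          rw [← NNReal.coe_lt_coe]
          push_cast
          exact hmlt c hc
  · intro b c h
    apply hTsupp
    intro h0
    apply h
    simp [h0]

/-- On a c-space, the strict splitting relation `≪'` satisfies
interpolation-by-order: if `ξ ≪' μ` and `μ ≤ ν` pointwise, then `ξ ≪' ν`. -/
theorem stmt_16 {X : Type*} [TopologicalSpace X] [T0Space X] (hc : cSpace X)
    (B C C' : Finset X) (r s s' : X → ℝ≥0∞)
    (hr : ∀ b ∈ B, 0 < r b ∧ r b ≠ ⊤) (hs : ∀ c ∈ C, 0 < s c ∧ s c ≠ ⊤)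
    (hs' : ∀ c ∈ C', 0 < s' c ∧ s' c ≠ ⊤)
    (h1 : strictSplit B r C s)
    (h2 : ∀ U : Set X, IsOpen U → simpleVal C s U ≤ simpleVal C' s' U) :
    strictSplit B r C' s' := by
  classical
  obtain ⟨w, hwfin, hwrow, hwcol, hwsupp⟩ := h1
  set R : X → X → Prop := fun b c => c ∈ interior {z | sOrd X b z} with hRdef
  -- strict Hall condition in ℝ≥0∞
  have hallE : ∀ A ⊆ B, A.Nonempty → ∑ b ∈ A, r b < ∑ c ∈ RC C' R A, s' c := by
    intro A hAB hAne
    set U : Set X := ⋃ b ∈ A, interior {z | sOrd X b z} with hUdef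
    have hUopen : IsOpen U := isOpen_biUnion fun b _ => isOpen_interior
    have hUmem : ∀ x, x ∈ U ↔ ∃ b ∈ A, R b x := by
      intro x
      rw [hUdef]
      simp [Set.mem_iUnion₂, hRdef]
    -- ∑_A r < simpleVal C s U
    have e0 : ∑ b ∈ A, r b = ∑ c ∈ C, ∑ b ∈ A, w b c := by
      rw [Finset.sum_comm]
      exact Finset.sum_congr rfl fun b hb => (hwrow b (hAB hb)).symm
    have e1 : ∑ c ∈ C.filter (fun c => c ∈ U), ∑ b ∈ A, w b c = ∑ c ∈ C, ∑ b ∈ A, w b c := by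
      apply Finset.sum_filter_of_ne
      intro c hcC hne
      have : ∃ b ∈ A, w b c ≠ 0 := by
        by_contra hcon
        push_neg at hcon
        exact hne (Finset.sum_eq_zero hcon)
      obtain ⟨b, hbA, hwb⟩ := this
      rw [hUmem c]
      exact ⟨b, hbA, hwsupp b (hAB hbA) c hcC hwb⟩
    have hC₁ne : (C.filter (fun c => c ∈ U)).Nonempty := by
      obtain ⟨b, hbA⟩ := hAne
      have hrb : r b ≠ 0 := (hr b (hAB hbA)).1.ne'
      have : ∃ c ∈ C, w b c ≠ 0 := by
        by_contra hcon
        push_neg at hcon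
        exact hrb ((hwrow b (hAB hbA)).symm.trans (Finset.sum_eq_zero hcon))
      obtain ⟨c, hcC, hwb⟩ := this
      refine ⟨c, Finset.mem_filter.mpr ⟨hcC, ?_⟩⟩
      rw [hUmem c]
      exact ⟨b, hbA, hwsupp b (hAB hbA) c hcC hwb⟩
    have e2 : ∑ c ∈ C.filter (fun c => c ∈ U), ∑ b ∈ A, w b c
        < ∑ c ∈ C.filter (fun c => c ∈ U), s c := by
      apply ENNReal.sum_lt_sum_of_nonempty hC₁ne
      intro c hcC
      have hcC' : c ∈ C := Finset.mem_filter.mp hcC |>.1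
      calc ∑ b ∈ A, w b c ≤ ∑ b ∈ B, w b c :=
            Finset.sum_le_sum_of_subset hAB
        _ < s c := hwcol c hcC'
    have e3 : ∑ c ∈ C.filter (fun c => c ∈ U), s c = simpleVal C s U := by
      rw [simpleVal, Finset.sum_filter]
    have e4 : simpleVal C' s' U = ∑ c ∈ RC C' R A, s' c := by
      rw [simpleVal, ← Finset.sum_filter]
      apply Finset.sum_congr _ (fun _ _ => rfl)
      ext c
      rw [Finset.mem_filter, mem_RC, hUmem c]
    calc ∑ b ∈ A, r b = ∑ c ∈ C, ∑ b ∈ A, w b c := e0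
      _ = ∑ c ∈ C.filter (fun c => c ∈ U), ∑ b ∈ A, w b c := e1.symm
      _ < simpleVal C s U := e3 ▸ e2
      _ ≤ simpleVal C' s' U := h2 U hUopen
      _ = ∑ c ∈ RC C' R A, s' c := e4
  -- move to ℝ≥0
  set ρ : X → ℝ≥0 := fun b => (r b).toNNReal with hρdef
  set σ : X → ℝ≥0 := fun c => (s' c).toNNReal with hσdef
  have hσpos : ∀ c ∈ C', 0 < σ c := by
    intro c hc
    rw [hσdef]
    beta_reduce
    exact ENNReal.toNNReal_pos (hs' c hc).1.ne' (hs' c hc).2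
  have hallN : ∀ A ⊆ B, A.Nonempty → ∑ b ∈ A, ρ b < ∑ c ∈ RC C' R A, σ c := by
    intro A hAB hAne
    have h := hallE A hAB hAne
    rw [← ENNReal.coe_lt_coe, ENNReal.coe_finset_sum, ENNReal.coe_finset_sum]
    have eL : ∑ b ∈ A, ((ρ b : ℝ≥0∞)) = ∑ b ∈ A, r b :=
      Finset.sum_congr rfl fun b hb => ENNReal.coe_toNNReal (hr b (hAB hb)).2
    have eR : ∑ c ∈ RC C' R A, ((σ c : ℝ≥0∞)) = ∑ c ∈ RC C' R A, s' c :=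
      Finset.sum_congr rfl fun c hc =>
        ENNReal.coe_toNNReal (hs' c (mem_RC.mp hc).1).2
    rw [eL, eR]
    exact h
  obtain ⟨t, htrow, htcol, htsupp⟩ := nnreal_flow B C' R ρ σ hσpos hallN
  refine ⟨fun b c => (t b c : ℝ≥0∞), ?_, ?_, ?_, ?_⟩
  · intro b _ c _
    exact ENNReal.coe_ne_top
  · intro b hb
    rw [← ENNReal.coe_finset_sum, htrow b hb]
    exact ENNReal.coe_toNNReal (hr b hb).2
  · intro c hc
    rw [← ENNReal.coe_finset_sum, ← ENNReal.coe_toNNReal (hs' c hc).2]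
    exact_mod_cast htcol c hc
  · intro b hb c hc hne
    have : t b c ≠ 0 := fun h0 => hne (by simp [h0])
    exact (htsupp b c this).2.2
end

section
/- The strict splitting relation implies the pointwise order: for simple valuations μ, ν on a c-space, if there exist t_{b,c} ≥ 0 with Σ_c t_{b,c} = r_b, Σ_b t_{b,c} < s_c, and t_{b,c} ≠ 0 ⟹ c ∈ int(↑b), then μ(U) ≤ ν(U) for every open set U. -/
open Set

open scoped ENNReal
/-- The strict splitting relation implies the pointwise order: for
simple valuations `μ = Σ_{b∈B} r_b η_b` and `ν = Σ_{c∈C} s_c η_c` on a c-space, if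
`μ ≪' ν` then `μ(U) ≤ ν(U)` for every open set `U`. -/
theorem stmt_17 {X : Type*} [TopologicalSpace X] [T0Space X] (hc : cSpace X)
    (B C : Finset X) (r s : X → ℝ≥0∞)
    (hr : ∀ b ∈ B, 0 < r b ∧ r b ≠ ⊤) (hs : ∀ c ∈ C, 0 < s c ∧ s c ≠ ⊤)
    (h : strictSplit B r C s) :
    ∀ U : Set X, IsOpen U → simpleVal B r U ≤ simpleVal C s U := by
  classical
  obtain ⟨t, htop, hrow, hcol, hint⟩ := h
  intro U hU
  have key : ∀ b ∈ B, b ∈ U → ∀ c ∈ C, t b c ≠ 0 → c ∈ U := by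
    intro b hb hbU c hc htc
    have h2 : sOrd X b c := interior_subset (s := {z | sOrd X b z}) (hint b hb c hc htc)
    have := mem_closure_iff.mp h2 U hU hbU
    simpa using this
  calc simpleVal B r U = ∑ b ∈ B, ∑ c ∈ C, if b ∈ U ∧ c ∈ U then t b c else 0 := by
        apply Finset.sum_congr rfl; intro b hb
        by_cases hbU : b ∈ U
        · simp only [hbU, if_true, true_and]
          rw [← hrow b hb]
          apply Finset.sum_congr rfl; intro c hc
          by_cases hcU : c ∈ U
          · simp [hcU]
          · simp only [hcU, if_false]
            by_contra hne
            exact hcU (key b hb hbU c hc hne)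
        · simp [hbU]
    _ ≤ simpleVal C s U := by
        rw [Finset.sum_comm]
        apply Finset.sum_le_sum; intro c hc
        by_cases hcU : c ∈ U
        · simp only [hcU, and_true, if_true]
          calc ∑ b ∈ B, (if b ∈ U then t b c else 0) ≤ ∑ b ∈ B, t b c := by
                apply Finset.sum_le_sum; intro b _; split <;> simp
            _ ≤ s c := (hcol c hc).le
        · simp [hcU]
end
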